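/- arXiv:math/0408020 — 8 statements merged into one kernel-verified Lean document; each statement's English description precedes it below -/
import Mathlib

section
/- Let (G, G⁺) be an ordered abelian group. Then G is almost unperforated (i.e., for all g ∈ G and n ∈ ℕ, if ng ∈ G⁺ and (n+1)g ∈ G⁺ then g ∈ G⁺) if and only if the positive cone G⁺, as an ordered abelian semigroup with the induced order, is almost unperforated (i.e., for all x, y ∈ G⁺ and n, m ∈ ℕ with nx ≤ my and n > m, one has x ≤ y). -/
theorem AddSubmonoid.nsmul_sub_mem_of_le {G : Type*} [AddCommGroup G] {P : AddSubmonoid G}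
    {x y : G} {m n : ℕ} (hx : x ∈ P) (hmn : m ≤ n) (h : m • y - n • x ∈ P) :
    m • (y - x) ∈ P := by
  obtain ⟨k, rfl⟩ := Nat.exists_eq_add_of_le hmn
  have hsplit : m • (y - x) = (m • y - (m + k) • x) + k • x := by
    rw [add_nsmul, smul_sub]; abel
  rw [hsplit]
  exact add_mem h (nsmul_mem hx k)

theorem stmt_0_general {G : Type*} [AddCommGroup G] (P : AddSubmonoid G) :
    (∀ (g : G) (n : ℕ), n • g ∈ P → (n + 1) • g ∈ P → g ∈ P) ↔
      (∀ x ∈ P, ∀ y ∈ P, ∀ n m : ℕ, m < n → m • y - n • x ∈ P → y - x ∈ P) := by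
  constructor
  · intro h x hx y hy n m hmn hd
    have hsucc : (m + 1) • y - n • x ∈ P := by
      rw [succ_nsmul, add_sub_right_comm]
      exact add_mem hd hy
    exact h (y - x) m (P.nsmul_sub_mem_of_le hx hmn.le hd)
      (P.nsmul_sub_mem_of_le hx hmn hsucc)
  · intro h g n hn hsucc
    -- With `x = n • g` and `y = (n + 1) • g` we have `(n + 1) • x = n • y` and `y - x = g`.
    have hcross : n • (n + 1) • g - (n + 1) • n • g ∈ P := by
      rw [smul_smul, smul_smul, mul_comm, sub_self]
      exact P.zero_mem
    simpa [succ_nsmul] using h (n • g) hn ((n + 1) • g) hsucc (n + 1) n (lt_add_one n) hcross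

/-- An ordered abelian group `(G, G⁺)`: `P` is the positive cone (an additive submonoid with
`P ∩ (-P) = {0}`), and the order is `x ≤ y ↔ y - x ∈ P`.  `G` is almost unperforated iff the
positive cone `G⁺`, with the induced order, is almost unperforated as a positive ordered
abelian semigroup. -/
theorem stmt_0 {G : Type*} [AddCommGroup G] (P : AddSubmonoid G)
    (hP : ∀ g : G, g ∈ P → -g ∈ P → g = 0) :
    (∀ (g : G) (n : ℕ), n • g ∈ P → (n + 1) • g ∈ P → g ∈ P) ↔
      (∀ x ∈ P, ∀ y ∈ P, ∀ n m : ℕ, m < n → m • y - n • x ∈ P → y - x ∈ P) :=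
  stmt_0_general P
end

section
/- Let (G, G⁺) be a simple ordered abelian group (meaning: every nonzero positive element is an order unit, i.e., for every g ∈ G⁺ \ {0} and every h ∈ G there exists k ∈ ℕ with h ≤ kg). Then G is almost unperforated if and only if G is weakly unperforated (i.e., for all g ∈ G and n ∈ ℕ with n ≥ 1, if ng ∈ G⁺ \ {0} then g ∈ G⁺). -/
/-!
Weak unperforation implies almost unperforation in any ordered group: if `n • g = 0` then
`(n + 1) • g = g`. Conversely, if `n • g` is a nonzero positive element of a simple group, it is an
order unit, so `(k * n) • g + g` is positive for some `k`; as `(k * n) • g` is positive too,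
almost unperforation gives `g ≥ 0`.
-/

namespace AddSubmonoid

variable {G : Type*} [AddCommGroup G]

def AlmostUnperforated (P : AddSubmonoid G) : Prop :=
  ∀ (g : G) (n : ℕ), n • g ∈ P → (n + 1) • g ∈ P → g ∈ P

def WeaklyUnperforated (P : AddSubmonoid G) : Prop :=
  ∀ (g : G) (n : ℕ), 1 ≤ n → n • g ∈ P → n • g ≠ 0 → g ∈ P

def IsOrderUnit (P : AddSubmonoid G) (u : G) : Prop :=
  ∀ h : G, ∃ k : ℕ, k • u - h ∈ P

theorem WeaklyUnperforated.almostUnperforated {P : AddSubmonoid G} (hP : P.WeaklyUnperforated) :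
    P.AlmostUnperforated := by
  intro g n hn hn1
  by_cases hzero : n • g = 0
  · rwa [succ_nsmul, hzero, zero_add] at hn1
  · have hpos : 1 ≤ n := Nat.one_le_iff_ne_zero.mpr fun h ↦ hzero (by rw [h, zero_nsmul])
    exact hP g n hpos hn hzero

theorem AlmostUnperforated.weaklyUnperforated {P : AddSubmonoid G} (hP : P.AlmostUnperforated)
    (hsimple : ∀ u ∈ P, u ≠ 0 → P.IsOrderUnit u) : P.WeaklyUnperforated := by
  intro g n _ hn hne
  obtain ⟨k, hk⟩ := hsimple (n • g) hn hne (-g)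
  rw [sub_neg_eq_add, ← mul_nsmul'] at hk
  exact hP g (k * n) (by rw [mul_nsmul']; exact P.nsmul_mem hn k) (by rwa [succ_nsmul])

end AddSubmonoid

theorem stmt_1_general {G : Type*} [AddCommGroup G] (P : AddSubmonoid G)
    (hsimple : ∀ g : G, g ∈ P → g ≠ 0 → ∀ h : G, ∃ k : ℕ, k • g - h ∈ P) :
    (∀ (g : G) (n : ℕ), n • g ∈ P → (n + 1) • g ∈ P → g ∈ P) ↔
      (∀ (g : G) (n : ℕ), 1 ≤ n → n • g ∈ P → n • g ≠ 0 → g ∈ P) :=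
  ⟨fun h ↦ AddSubmonoid.AlmostUnperforated.weaklyUnperforated h hsimple,
    fun h ↦ AddSubmonoid.WeaklyUnperforated.almostUnperforated h⟩

/-- A simple ordered abelian group `(G, G⁺)` (every nonzero positive element is an order unit)
is almost unperforated iff it is weakly unperforated. -/
theorem stmt_1 {G : Type*} [AddCommGroup G] (P : AddSubmonoid G)
    (hP : ∀ g : G, g ∈ P → -g ∈ P → g = 0)
    (hsimple : ∀ g : G, g ∈ P → g ≠ 0 → ∀ h : G, ∃ k : ℕ, k • g - h ∈ P) :
    (∀ (g : G) (n : ℕ), n • g ∈ P → (n + 1) • g ∈ P → g ∈ P) ↔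
      (∀ (g : G) (n : ℕ), 1 ≤ n → n • g ∈ P → n • g ≠ 0 → g ∈ P) :=
  stmt_1_general P hsimple
end

section
/- Let G = ℤ² with positive cone G⁺ the additive submonoid generated by (1,0), (0,1), and (2,−2). Then (G, G⁺) is almost unperforated: for every g ∈ ℤ² and n ∈ ℕ, if ng ∈ G⁺ and (n+1)g ∈ G⁺, then g ∈ G⁺. -/
/-!
The closure of `(1, 0)`, `(0, 1)`, `(2, -2)` is cut out by `0 ≤ x`, `0 ≤ x + y` and the parity
condition `x + y = 0 → 2 ∣ y`: when `y < 0`, subtracting `c • (2, -2)` with `c = ⌈-y / 2⌉` brings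
the second coordinate into `{0, 1}`. Each of these conditions on `(n + 1) • g` and `n • g`
descends to `g`, the parity one because `2 ∣ n * y` and `2 ∣ (n + 1) * y` force `2 ∣ y`.
-/

def AddSubmonoid.AlmostUnperforated_s3 {G : Type*} [AddMonoid G] (S : AddSubmonoid G) : Prop :=
  ∀ (g : G) (n : ℕ), n • g ∈ S → (n + 1) • g ∈ S → g ∈ S

theorem dvd_of_dvd_mul_of_dvd_add_one_mul {R : Type*} [Ring R] {d n y : R}
    (hn : d ∣ n * y) (hn₁ : d ∣ (n + 1) * y) : d ∣ y := by
  rwa [add_one_mul, dvd_add_right hn] at hn₁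

namespace IntProdCone

def cone : AddSubmonoid (ℤ × ℤ) where
  carrier := {p | 0 ≤ p.1 ∧ 0 ≤ p.1 + p.2 ∧ (p.1 + p.2 = 0 → 2 ∣ p.2)}
  zero_mem' := by simp
  add_mem' := by
    rintro ⟨x, y⟩ ⟨x', y'⟩ ⟨hx, hxy, hy⟩ ⟨hx', hxy', hy'⟩
    refine ⟨by dsimp; omega, by dsimp; omega, fun h => ?_⟩
    dsimp at h ⊢
    have := hy (by omega)
    have := hy' (by omega)
    omega

theorem mem_cone {x y : ℤ} :
    (x, y) ∈ cone ↔ 0 ≤ x ∧ 0 ≤ x + y ∧ (x + y = 0 → 2 ∣ y) :=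
  Iff.rfl

theorem mk_mem_closure (a b c : ℕ) :
    ((a + 2 * c : ℤ), (b - 2 * c : ℤ)) ∈
      AddSubmonoid.closure {((1, 0) : ℤ × ℤ), (0, 1), (2, -2)} := by
  set S := AddSubmonoid.closure {((1, 0) : ℤ × ℤ), (0, 1), (2, -2)}
  have h₁ : ((1, 0) : ℤ × ℤ) ∈ S := AddSubmonoid.subset_closure (by simp)
  have h₂ : ((0, 1) : ℤ × ℤ) ∈ S := AddSubmonoid.subset_closure (by simp)
  have h₃ : ((2, -2) : ℤ × ℤ) ∈ S := AddSubmonoid.subset_closure (by simp)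
  have key := add_mem (add_mem (nsmul_mem h₁ a) (nsmul_mem h₂ b)) (nsmul_mem h₃ c)
  convert key using 1
  ext <;> simp <;> ring

theorem cone_le_closure :
    cone ≤ AddSubmonoid.closure {((1, 0) : ℤ × ℤ), (0, 1), (2, -2)} := by
  rintro ⟨x, y⟩ ⟨hx, hxy, hy⟩
  dsimp at hx hxy hy
  obtain ⟨c, hcx, hcy⟩ : ∃ c : ℕ, 2 * (c : ℤ) ≤ x ∧ 0 ≤ y + 2 * c :=
    ⟨((1 - y) / 2).toNat, by omega⟩
  convert mk_mem_closure (x - 2 * c).toNat (y + 2 * c).toNat c using 2 <;> omega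

theorem closure_eq_cone : AddSubmonoid.closure {((1, 0) : ℤ × ℤ), (0, 1), (2, -2)} = cone := by
  refine le_antisymm (AddSubmonoid.closure_le.2 ?_) cone_le_closure
  simp [Set.insert_subset_iff, mem_cone]

theorem almostUnperforated_cone : cone.AlmostUnperforated_s3 := by
  rintro ⟨x, y⟩ n ⟨-, -, hn⟩ ⟨hx, hxy, hn₁⟩
  simp only [Prod.smul_mk, nsmul_eq_mul, ← mul_add] at hn hx hxy hn₁
  have hpos : (0 : ℤ) < (n + 1 : ℕ) := by positivity
  refine ⟨nonneg_of_mul_nonneg_right hx hpos, nonneg_of_mul_nonneg_right hxy hpos, fun h => ?_⟩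
  push_cast at hn₁
  exact dvd_of_dvd_mul_of_dvd_add_one_mul (hn (by simp [h])) (hn₁ (by simp [h]))

end IntProdCone

/-- `G = ℤ²` with positive cone generated by `(1,0)`, `(0,1)`, `(2,-2)` is almost
unperforated. -/
theorem stmt_3 (g : ℤ × ℤ) (n : ℕ)
    (h1 : n • g ∈ AddSubmonoid.closure {((1, 0) : ℤ × ℤ), (0, 1), (2, -2)})
    (h2 : (n + 1) • g ∈ AddSubmonoid.closure {((1, 0) : ℤ × ℤ), (0, 1), (2, -2)}) :
    g ∈ AddSubmonoid.closure {((1, 0) : ℤ × ℤ), (0, 1), (2, -2)} := by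
  rw [IntProdCone.closure_eq_cone] at h1 h2 ⊢
  exact IntProdCone.almostUnperforated_cone g n h1 h2
end

section
/- Let W be a positive ordered abelian semigroup. Suppose W satisfies: for all x, y ∈ W with x ∝ y (meaning x ≤ ny for some n ∈ ℕ) and f(x) < f(y) for all states f ∈ S(W, y), one has x ≤ y. Then W is almost unperforated. -/
open scoped ENNReal

/-!
If `n • x ≤ m • y` with `m < n`, then `x ≤ n • x ≤ m • y`, so `x ∝ y`, and every state `f` with
`f y = 1` satisfies `n * f x ≤ m < n`, i.e. `f x < 1 = f y`. The hypothesis then gives `x ≤ y`.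
-/

theorem le_nsmul_self_of_le_add_left {W : Type*} [AddMonoid W] [LE W]
    (hpos : ∀ x y : W, y ≤ y + x) (x : W) {n : ℕ} (hn : n ≠ 0) : x ≤ n • x := by
  obtain ⟨k, rfl⟩ := Nat.exists_eq_succ_of_ne_zero hn
  rw [succ_nsmul']
  exact hpos _ _

theorem ENNReal.map_zero_of_map_add {M : Type*} [AddZeroClass M] {f : M → ℝ≥0∞}
    (hf : ∀ a b, f (a + b) = f a + f b) (h0 : f 0 ≠ ∞) : f 0 = 0 :=
  (ENNReal.add_right_inj h0).mp (by rw [add_zero, ← hf, add_zero])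

theorem ENNReal.map_nsmul_of_map_add {M : Type*} [AddMonoid M] {f : M → ℝ≥0∞}
    (hf : ∀ a b, f (a + b) = f a + f b) (h0 : f 0 ≠ ∞) (k : ℕ) (a : M) :
    f (k • a) = k * f a :=
  let g : M →+ ℝ≥0∞ := ⟨⟨f, ENNReal.map_zero_of_map_add hf h0⟩, hf⟩
  (map_nsmul g k a).trans (nsmul_eq_mul _ _)

theorem ENNReal.lt_one_of_natCast_mul_le {m n : ℕ} {t : ℝ≥0∞} (hmn : m < n)
    (h : n * t ≤ m) : t < 1 := by
  by_contra! ht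
  have : (n : ℝ≥0∞) ≤ m := (le_mul_of_one_le_right zero_le ht).trans h
  exact absurd (Nat.cast_le.mp this) (not_le.mpr hmn)

theorem stmt_5_general {W : Type*} [AddCommMonoid W] [Preorder W]
    (hpos : ∀ x y : W, y ≤ y + x)
    (H : ∀ x y : W, (∃ n : ℕ, x ≤ n • y) →
      (∀ f : W → ℝ≥0∞, (∀ a b : W, f (a + b) = f a + f b) →
        (∀ a b : W, a ≤ b → f a ≤ f b) → f y = 1 → f x < f y) →
      x ≤ y) :
    ∀ (x y : W) (n m : ℕ), m < n → n • x ≤ m • y → x ≤ y := by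
  intro x y n m hmn hle
  have hx : x ≤ n • x := le_nsmul_self_of_le_add_left hpos x (by omega)
  refine H x y ⟨m, hx.trans hle⟩ fun f hf_add hf_mono hfy => ?_
  have hf0 : f 0 ≠ ∞ :=
    ne_top_of_le_ne_top (hfy ▸ ENNReal.one_ne_top) (hf_mono 0 y (by simpa using hpos y 0))
  have hnm : n * f x ≤ m := by
    simpa only [ENNReal.map_nsmul_of_map_add hf_add hf0, hfy, mul_one] using hf_mono _ _ hle
  rw [hfy]
  exact ENNReal.lt_one_of_natCast_mul_le hmn hnm

/-- Let `W` be a positive ordered abelian semigroup.  If for all `x, y ∈ W` with `x ∝ y`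
(i.e. `x ≤ n • y` for some `n`) and `f x < f y` for all states `f ∈ S(W, y)` one has
`x ≤ y`, then `W` is almost unperforated. -/
theorem stmt_5 {W : Type*} [AddCommMonoid W] [Preorder W]
    (hadd : ∀ x y z : W, x ≤ y → x + z ≤ y + z)
    (hpos : ∀ x y : W, y ≤ y + x)
    (H : ∀ x y : W, (∃ n : ℕ, x ≤ n • y) →
      (∀ f : W → ℝ≥0∞, (∀ a b : W, f (a + b) = f a + f b) →
        (∀ a b : W, a ≤ b → f a ≤ f b) → f y = 1 → f x < f y) →
      x ≤ y) :
    ∀ (x y : W) (n m : ℕ), m < n → n • x ≤ m • y → x ≤ y :=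
  stmt_5_general hpos H
end

section
/- Let A be a C*-algebra and a, b ∈ A positive elements with ‖a − b‖ < ε. Then (a − ε)₊ is Cuntz subequivalent to b, i.e., there exists a sequence (xₙ) in A with xₙ* b xₙ → (a − ε)₊. -/
/-!
Put `e = (a - ε)₊`, `δ = ε - ‖a - b‖ > 0` and let `r = e^{1/2}`, computed by the functional
calculus of `a`. Since `r a r = e² + ε e`, conjugating `a - b ≤ ‖a - b‖` by `r` gives
`δ e ≤ e² + δ e ≤ r b r`.

Whenever `δ r*r ≤ B := r* b r`, let `C = (B + t)^{-1/2}` and `x = r C r*`.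
Then `C B C + t C² = 1`, so `r r* - x* b x = t (C r*)* (C r*)`, of norm `t ‖C r*r C‖ ≤ t ‖C B C‖ / δ ≤ t / δ`.
Letting `t → 0` exhibits `r r* = e` as a limit of elements `x* b x`. In the non-unital case `C`
lives in the unitization, but `x` does not, because `A` is an ideal there.
-/

open Filter Topology Unitization
open scoped CStarAlgebra

section PosPart

variable {A : Type*} [NonUnitalCStarAlgebra A]

lemma exists_isSelfAdjoint_mul_self_eq_posPart {a : A} (ha : IsSelfAdjoint a) {ε : ℝ}
    (hε : 0 ≤ ε) : ∃ r : A, IsSelfAdjoint r ∧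
      r * r = cfcₙ (fun t : ℝ => max (t - ε) 0) a ∧
      r * a * r = cfcₙ (fun t : ℝ => max (t - ε) 0) a * cfcₙ (fun t : ℝ => max (t - ε) 0) a +
        ε • cfcₙ (fun t : ℝ => max (t - ε) 0) a := by
  refine ⟨cfcₙ (fun t : ℝ => √(max (t - ε) 0)) a, cfcₙ_predicate _ _, ?_, ?_⟩
  · rw [← cfcₙ_mul _ _ a]
    exact cfcₙ_congr fun t _ => Real.mul_self_sqrt (le_max_right _ _)
  · rw [← cfcₙ_mul _ _ a, ← cfcₙ_smul .., ← cfcₙ_add ..]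
    nth_rw 2 [← cfcₙ_id' ℝ a]
    rw [← cfcₙ_mul _ _ a, ← cfcₙ_mul _ _ a]
    refine cfcₙ_congr fun t _ => ?_
    rw [smul_eq_mul, mul_right_comm, Real.mul_self_sqrt (le_max_right _ _)]
    rcases le_total t ε with ht | ht
    · simp [max_eq_right (sub_nonpos.2 ht)]
    · rw [max_eq_left (sub_nonneg.2 ht)]
      ring

end PosPart

section Unital

variable {A : Type*} [CStarAlgebra A] [PartialOrder A] [StarOrderedRing A]

lemma exists_isSelfAdjoint_mul_add_algebraMap_mul_eq_one {B : A} (hB : 0 ≤ B) {t : ℝ}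
    (ht : 0 < t) : ∃ C : A, IsSelfAdjoint C ∧ C * (B + algebraMap ℝ A t) * C = 1 := by
  have hφ : ContinuousOn (fun s : ℝ => (√(s + t))⁻¹) (spectrum ℝ B) :=
    ContinuousOn.inv₀ (by fun_prop) fun s hs =>
      (Real.sqrt_pos.2 (by linarith [spectrum_nonneg_of_nonneg hB hs])).ne'
  refine ⟨cfc (fun s : ℝ => (√(s + t))⁻¹) B, cfc_predicate _ _, ?_⟩
  have hBt : B + algebraMap ℝ A t = cfc (fun s : ℝ => s + t) B := by
    rw [cfc_add_const t (fun s => s) B, cfc_id' ℝ B]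
  rw [hBt, ← cfc_mul _ _ B hφ,
    ← cfc_mul (fun s => (√(s + t))⁻¹ * (s + t)) _ B (hφ.mul (by fun_prop)) hφ,
    ← cfc_const_one ℝ B]
  refine cfc_congr fun s hs => ?_
  have hst : 0 < s + t := by linarith [spectrum_nonneg_of_nonneg hB hs]
  field_simp
  rw [Real.sq_sqrt hst.le]

lemma exists_norm_mul_star_sub_conj_le_of_smul_le {b r : A} {δ t : ℝ} (hδ : 0 < δ) (ht : 0 < t)
    (h : δ • (star r * r) ≤ star r * b * r) :
    ∃ C : A, ‖r * star r - star (r * C * star r) * b * (r * C * star r)‖ ≤ t / δ := by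
  set B := star r * b * r
  have hB : 0 ≤ B := (smul_nonneg hδ.le (star_mul_self_nonneg r)).trans h
  obtain ⟨C, hC, hCBC⟩ := exists_isSelfAdjoint_mul_add_algebraMap_mul_eq_one hB ht
  have hCBC_eq : C * B * C = 1 - t • (C * C) := by
    rw [← hCBC, mul_add, add_mul, Algebra.algebraMap_eq_smul_one, mul_smul_comm, mul_one,
      smul_mul_assoc, add_sub_cancel_right]
  have hconj {x y : A} (hxy : x ≤ y) : C * x * C ≤ C * y * C := by
    simpa only [hC.star_eq] using star_left_conjugate_le_conjugate hxy C
  have hdiff : r * star r - star (r * C * star r) * b * (r * C * star r)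
      = t • (star (C * star r) * (C * star r)) := by
    have hx : star (r * C * star r) * b * (r * C * star r) = r * (C * B * C) * star r := by
      simp only [B, star_mul, star_star, hC.star_eq, mul_assoc]
    rw [hx, hCBC_eq]
    simp only [star_mul, star_star, hC.star_eq, mul_sub, sub_mul, mul_one, mul_smul_comm,
      smul_mul_assoc, mul_assoc, sub_sub_cancel]
  have hnorm : ‖star (C * star r) * (C * star r)‖ = ‖C * (star r * r) * C‖ := by
    rw [CStarRing.norm_star_mul_self, ← CStarRing.norm_self_mul_star]
    simp only [star_mul, star_star, hC.star_eq, mul_assoc]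
  have hCBC_le : C * B * C ≤ 1 := by
    rw [hCBC_eq]
    exact sub_le_self _ <|
      smul_nonneg ht.le (by simpa only [hC.star_eq] using star_mul_self_nonneg C)
  have hbound : δ * ‖C * (star r * r) * C‖ ≤ 1 := calc
    δ * ‖C * (star r * r) * C‖ = ‖C * (δ • (star r * r)) * C‖ := by
      rw [mul_smul_comm, smul_mul_assoc, norm_smul, Real.norm_of_nonneg hδ.le]
    _ ≤ ‖C * B * C‖ := CStarAlgebra.norm_le_norm_of_nonneg_of_le
      (by simpa using hconj (smul_nonneg hδ.le (star_mul_self_nonneg r))) (hconj h)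
    _ ≤ 1 := (CStarAlgebra.norm_le_one_iff_of_nonneg _ (by simpa using hconj hB)).2 hCBC_le
  refine ⟨C, ?_⟩
  rw [hdiff, norm_smul, Real.norm_of_nonneg ht.le, hnorm, le_div_iff₀ hδ]
  nlinarith

end Unital

section NonUnital

variable {A : Type*} [NonUnitalCStarAlgebra A] [PartialOrder A] [StarOrderedRing A]

lemma exists_norm_mul_star_sub_le_of_smul_le {b r : A} {δ t : ℝ} (hδ : 0 < δ) (ht : 0 < t)
    (h : δ • (star r * r) ≤ star r * b * r) :
    ∃ x : A, ‖r * star r - star x * b * x‖ ≤ t / δ := by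
  have h' : δ • (star (r : A⁺¹) * r) ≤ star (r : A⁺¹) * b * r := by
    rw [← sub_nonneg] at h ⊢
    exact_mod_cast inr_nonneg_iff.2 h
  obtain ⟨C, hC⟩ := exists_norm_mul_star_sub_conj_le_of_smul_le hδ ht h'
  have hfst : ((r : A⁺¹) * C * star (r : A⁺¹)).fst = 0 := by simp
  lift (r : A⁺¹) * C * star (r : A⁺¹) to A using hfst with x
  refine ⟨x, ?_⟩
  rw [← norm_inr (𝕜 := ℂ)]
  exact_mod_cast hC

lemma exists_tendsto_star_mul_mul_of_smul_le {b r : A} {δ : ℝ} (hδ : 0 < δ)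
    (h : δ • (star r * r) ≤ star r * b * r) :
    ∃ x : ℕ → A, Tendsto (fun n => star (x n) * b * x n) atTop (𝓝 (r * star r)) := by
  have hmem : r * star r ∈ closure (Set.range fun x : A => star x * b * x) := by
    refine Metric.mem_closure_iff.2 fun η hη => ?_
    obtain ⟨x, hx⟩ :=
      exists_norm_mul_star_sub_le_of_smul_le hδ (by positivity : 0 < δ * η / 2) h
    refine ⟨_, ⟨x, rfl⟩, ?_⟩
    rw [dist_eq_norm]
    calc _ ≤ δ * η / 2 / δ := hx
      _ < η := by field_simp; linarith
  obtain ⟨y, hy, hlim⟩ := mem_closure_iff_seq_limit.1 hmem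
  choose x hx using hy
  exact ⟨x, by simpa only [hx] using hlim⟩

end NonUnital

/-- In a C*-algebra, if `a, b` are positive and `‖a - b‖ < ε`, then `(a - ε)₊ ≾ b`. -/
theorem stmt_9 {A : Type*} [NonUnitalCStarAlgebra A] [PartialOrder A] [StarOrderedRing A]
    (a b : A) (ha : 0 ≤ a) (hb : 0 ≤ b) (ε : ℝ) (h : ‖a - b‖ < ε) :
    ∃ x : ℕ → A, Tendsto (fun n => star (x n) * b * x n) atTop
      (𝓝 (cfcₙ (fun t : ℝ => max (t - ε) 0) a)) := by
  set e := cfcₙ (fun t : ℝ => max (t - ε) 0) a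
  obtain ⟨r, hr, hrr, hrar⟩ :=
    exists_isSelfAdjoint_mul_self_eq_posPart ha.isSelfAdjoint ((norm_nonneg _).trans h.le)
  have hee : 0 ≤ e * e := by
    have he : IsSelfAdjoint e := cfcₙ_predicate _ a
    simpa only [he.star_eq] using star_mul_self_nonneg e
  have key : (ε - ‖a - b‖) • (star r * r) ≤ star r * b * r := by
    have hab := CStarAlgebra.star_left_conjugate_le_norm_smul (a := r) (b := a - b)
      (ha.isSelfAdjoint.sub hb.isSelfAdjoint)
    rw [hr.star_eq, hrr, mul_sub, sub_mul, hrar, sub_le_iff_le_add] at hab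
    rw [hr.star_eq, hrr, sub_smul]
    calc ε • e - ‖a - b‖ • e ≤ e * e + ε • e - ‖a - b‖ • e :=
          sub_le_sub_right (le_add_of_nonneg_left hee) _
      _ ≤ r * b * r := sub_le_iff_le_add'.2 hab
  simpa only [hr.star_eq, hrr] using exists_tendsto_star_mul_mul_of_smul_le (sub_pos.2 h) key
end

section
/- Let A be a unital C*-algebra, a a positive element of A, 0 < ε' < ε, and let A⁰ be the hereditary subalgebra generated by g_ε(a), where g_ε(t) = max{1 − t/ε, 0}. If w is a unitary in A satisfying w·(a − ε')₊ = (a − ε')₊, then w ∈ A⁰ + ℂ·1. -/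
/-!
With `s = ε - ε' > 0`, the continuous functions `q t = ε / max (ε - t) s` and
`m t = (max (t - ε') s)⁻¹` satisfy `g_ε q + (· - ε')₊ m = 1` on `ℝ`. Through the functional
calculus this becomes `g_ε(a) q(a) + m(a) (a - ε')₊ = 1`, with all factors commuting. As `w - 1`
is annihilated by `(a - ε')₊` on both sides, multiplying `w - 1` by this identity on the left and
on the right gives `w - 1 = g_ε(a) (q(a) (w - 1) q(a)) g_ε(a)`, so `w = (w - 1) + 1 ∈ A⁰ + ℂ·1`.
-/

theorem eq_mul_mul_mul_of_mul_eq_zero {R : Type*} [Ring R] {x p g q m : R}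
    (hl : g * q + m * p = 1) (hr : q * g + p * m = 1) (hxp : x * p = 0) (hpx : p * x = 0) :
    x = g * (q * x * q) * g := by
  have hx_left : g * q * x = x := by
    rw [← add_zero (g * q * x), ← mul_zero m, ← hpx, ← mul_assoc, ← add_mul, hl, one_mul]
  have hx_right : x * q * g = x := by
    rw [← add_zero (x * q * g), ← zero_mul m, ← hxp, mul_assoc x q, mul_assoc x p, ← mul_add, hr,
      mul_one]
  calc x = g * q * (x * q * g) := by rw [hx_right, hx_left]
    _ = g * (q * x * q) * g := by noncomm_ring

theorem IsSelfAdjoint.mul_eq_self_of_mul_eq_self {R : Type*} [Monoid R] [StarMul R] {w p : R}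
    (hp : IsSelfAdjoint p) (hw : star w * w = 1) (h : w * p = p) : p * w = p := by
  have hstar : p * star w = p := by simpa [hp.star_eq] using congrArg star h
  rw [← hstar, mul_assoc, hw, mul_one, hstar]

theorem cfc_mul_add_cfc_mul_eq_one {R A : Type*} {P : A → Prop} [CommSemiring R] [StarRing R]
    [MetricSpace R] [IsTopologicalSemiring R] [ContinuousStar R] [TopologicalSpace A] [Ring A]
    [StarRing A] [Algebra R A] [ContinuousFunctionalCalculus R A P] {a : A} {f g h k : R → R}
    (hone : ∀ t ∈ spectrum R a, f t * g t + h t * k t = 1) (ha : P a := by cfc_tac)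
    (hf : ContinuousOn f (spectrum R a) := by cfc_cont_tac)
    (hg : ContinuousOn g (spectrum R a) := by cfc_cont_tac)
    (hh : ContinuousOn h (spectrum R a) := by cfc_cont_tac)
    (hk : ContinuousOn k (spectrum R a) := by cfc_cont_tac) :
    cfc f a * cfc g a + cfc h a * cfc k a = 1 := by
  rw [← cfc_mul f g a, ← cfc_mul h k a,
    ← cfc_add a (fun t => f t * g t) (fun t => h t * k t) (hf.mul hg) (hh.mul hk), ← cfc_one R a]
  exact cfc_congr hone

theorem max_one_sub_div_mul_add_max_sub_mul_eq_one {ε' ε : ℝ} (hε : 0 < ε) (hε' : ε' < ε)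
    (t : ℝ) :
    max (1 - t / ε) 0 * (ε / max (ε - t) (ε - ε')) +
      max (t - ε') 0 * (max (t - ε') (ε - ε'))⁻¹ = 1 := by
  rcases le_total t ε' with h | h
  · have ht : 0 < ε - t := by linarith
    rw [max_eq_left (by rw [sub_nonneg, div_le_one hε]; linarith), max_eq_left (by linarith),
      max_eq_right (by linarith)]
    field_simp
    ring
  rcases le_total t ε with h' | h'
  · have hs : 0 < ε - ε' := sub_pos.2 hε'
    rw [max_eq_left (by rw [sub_nonneg, div_le_one hε]; linarith), max_eq_right (by linarith),
      max_eq_left (by linarith), max_eq_right (by linarith)]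
    field_simp
    ring
  · rw [max_eq_right (by rw [sub_nonpos, one_le_div hε]; linarith), zero_mul, zero_add,
      max_eq_left (by linarith), max_eq_left (by linarith), mul_inv_cancel₀ (by linarith)]

/-- Let `A` be a unital C*-algebra, `a ≥ 0`, `0 < ε' < ε`, and let `A⁰` be the hereditary
subalgebra generated by `g_ε(a)` (the closure of `g_ε(a) A g_ε(a)`), where
`g_ε(t) = max (1 - t/ε) 0`.  If a unitary `w` satisfies `w (a - ε')₊ = (a - ε')₊`, then
`w ∈ A⁰ + ℂ·1`. -/
theorem stmt_13 {A : Type*} [CStarAlgebra A] [PartialOrder A] [StarOrderedRing A]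
    (a : A) (ha : 0 ≤ a) (ε' ε : ℝ) (h0 : 0 < ε') (hε : ε' < ε)
    (w : A) (hw : star w * w = 1 ∧ w * star w = 1)
    (hfix : w * cfc (fun t : ℝ => max (t - ε') 0) a = cfc (fun t : ℝ => max (t - ε') 0) a) :
    ∃ x ∈ closure {z : A | ∃ y : A,
        z = cfc (fun t : ℝ => max (1 - t / ε) 0) a * y * cfc (fun t : ℝ => max (1 - t / ε) 0) a},
      ∃ c : ℂ, w = x + c • (1 : A) := by
  have hε₀ : 0 < ε := h0.trans hε
  have hq : Continuous fun t : ℝ => ε / max (ε - t) (ε - ε') :=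
    continuous_const.div (by fun_prop) fun t => (lt_max_of_lt_right (sub_pos.2 hε)).ne'
  have hm : Continuous fun t : ℝ => (max (t - ε') (ε - ε'))⁻¹ :=
    (by fun_prop : Continuous _).inv₀ fun t => (lt_max_of_lt_right (sub_pos.2 hε)).ne'
  have hpart := max_one_sub_div_mul_add_max_sub_mul_eq_one hε₀ hε
  set p := cfc (fun t : ℝ => max (t - ε') 0) a
  have hwp : (w - 1) * p = 0 := by rw [sub_mul, one_mul, hfix, sub_self]
  have hp : IsSelfAdjoint p := cfc_predicate _ a
  have hpw : p * (w - 1) = 0 := by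
    rw [mul_sub, mul_one, hp.mul_eq_self_of_mul_eq_self hw.1 hfix, sub_self]
  set q := cfc (fun t : ℝ => ε / max (ε - t) (ε - ε')) a
  set m := cfc (fun t : ℝ => (max (t - ε') (ε - ε'))⁻¹) a
  set g := cfc (fun t : ℝ => max (1 - t / ε) 0) a
  have hl : g * q + m * p = 1 :=
    cfc_mul_add_cfc_mul_eq_one (hg := hq.continuousOn) (hh := hm.continuousOn) fun t _ => by
      linarith [hpart t, mul_comm (max (t - ε') 0) (max (t - ε') (ε - ε'))⁻¹]
  have hr : q * g + p * m = 1 :=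
    cfc_mul_add_cfc_mul_eq_one (hf := hq.continuousOn) (hk := hm.continuousOn) fun t _ => by
      linarith [hpart t, mul_comm (max (1 - t / ε) 0) (ε / max (ε - t) (ε - ε'))]
  exact ⟨w - 1, subset_closure ⟨q * (w - 1) * q, eq_mul_mul_mul_of_mul_eq_zero hl hr hwp hpw⟩,
    1, by simp⟩
end

section
/- Let V be a simple positive ordered abelian semigroup (every nonzero element is an order unit) equipped with the algebraic order, and let γ : V → G be the Grothendieck group homomorphism with G⁺ = γ(V). If V is almost unperforated, then G⁺ is almost unperforated: for x, y ∈ V and n ∈ ℕ with (n+1)γ(x) ≤ nγ(y), one has γ(x) ≤ γ(y). -/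
/-!
If `(n+1)γ(x) ≤ nγ(y)` in the Grothendieck group, then `n y + u = (n+1) x + z + u` in `V` for some
`u, z`. Adding this relation to itself `N` times keeps the single cancelling summand `u`, and
simplicity gives `u ≤ k y`; with `N = k + 1` this yields `(N n + k) y ≥ N (n+1) x` in `V`, where
`N n + k < N (n+1)`, so almost unperforation of `V` gives `x ≤ y`.
-/

section

variable {V : Type*} [AddCommMonoid V]

theorem nsmul_add_eq_nsmul_add_of_add_eq_add {a b u : V} (h : a + u = b + u) (N : ℕ) :
    N • a + u = N • b + u := by
  induction N with
  | zero => rw [zero_smul, zero_smul]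
  | succ N ih =>
    calc (N + 1) • a + u = N • a + (a + u) := by rw [succ_nsmul]; abel
      _ = (N • a + u) + b := by rw [h]; abel
      _ = (N + 1) • b + u := by rw [ih, succ_nsmul]; abel

theorem exists_lt_nsmul_le_nsmul_of_add_eq_add {x y z u w : V} {n k : ℕ}
    (h : n • y + u = (n + 1) • x + z + u) (hu : k • y = u + w) :
    ∃ m m' : ℕ, m' < m ∧ ∃ w' : V, m' • y = m • x + w' := by
  have hN := nsmul_add_eq_nsmul_add_of_add_eq_add h (k + 1)
  refine ⟨(k + 1) * (n + 1), (k + 1) * n + k, by nlinarith, (k + 1) • z + u + w, ?_⟩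
  calc ((k + 1) * n + k) • y = ((k + 1) • (n • y) + u) + w := by
        rw [add_smul, mul_smul, hu]; abel
    _ = ((k + 1) * (n + 1)) • x + ((k + 1) • z + u + w) := by
        rw [hN, smul_add, mul_smul]; abel

end

/-- Let `V` be a simple positive ordered abelian semigroup with the algebraic order, and
`γ : V → K₀ = G` the Grothendieck map with positive cone `G⁺ = γ(V)`; the order on `G` is
`γ(x) ≤ γ(y)` iff `γ(y) - γ(x) ∈ γ(V)`, i.e. iff `∃ z u, y + u = x + z + u`.  If `V` is
almost unperforated then so is `G⁺`: if `(n+1)γ(x) ≤ nγ(y)` then `γ(x) ≤ γ(y)`. -/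
theorem stmt_16 {V : Type*} [AddCommMonoid V]
    (hsimple : ∀ y : V, y ≠ 0 → ∀ u : V, ∃ (k : ℕ) (w : V), k • y = u + w)
    (hau : ∀ (x y : V) (n m : ℕ), m < n → (∃ w : V, m • y = n • x + w) →
      ∃ w : V, y = x + w) :
    ∀ (x y : V) (n : ℕ),
      (∃ z u : V, n • y + u = (n + 1) • x + z + u) →
      ∃ z u : V, y + u = x + z + u := by
  rintro x y n ⟨z, u, h⟩
  rcases eq_or_ne y 0 with rfl | hy
  · refine ⟨n • x + z, u, ?_⟩
    rw [nsmul_zero, zero_add] at h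
    conv_lhs => rw [zero_add, h, succ_nsmul']
    abel
  · obtain ⟨k, w, hu⟩ := hsimple y hy u
    obtain ⟨m, m', hlt, hle⟩ := exists_lt_nsmul_le_nsmul_of_add_eq_add h hu
    obtain ⟨w', hw'⟩ := hau x y m m' hlt hle
    exact ⟨w', 0, by rw [hw']⟩
end

section
/- Let V be a positive ordered abelian semigroup with the algebraic order and the cancellation property, and let γ : V → G be the Grothendieck map with G⁺ = γ(V). If V is almost unperforated, then (G, G⁺) is almost unperforated. -/
/-!
If `n • a = n • b + z` and `(n + 1) • a = (n + 1) • b + z'`, then multiplying out and cancelling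
gives `n • z' = (n + 1) • z`, so almost unperforation yields `z' = z + w`. Comparing
`(n + 1) • a = n • a + a` with `(n + 1) • b + z + w` and cancelling `n • b + z` leaves `a = b + w`.
-/

section Cancel

variable {V : Type*} [AddCommMonoid V] [IsRightCancelAdd V]

theorem nsmul_eq_nsmul_of_nsmul_eq_nsmul_add {a b z z' : V} {m k : ℕ}
    (hm : m • a = m • b + z) (hk : k • a = k • b + z') : k • z = m • z' := by
  apply add_right_cancel (b := (k * m) • b)
  calc k • z + (k * m) • b = k • (m • a) := by rw [hm, smul_add, mul_smul, add_comm]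
    _ = m • (k • a) := smul_comm k m a
    _ = m • z' + (k * m) • b := by rw [hk, smul_add, ← mul_smul, mul_comm, add_comm]

theorem eq_add_of_nsmul_eq_nsmul_add_of_succ_nsmul {a b z w : V} {n : ℕ}
    (hn : n • a = n • b + z) (hn1 : (n + 1) • a = (n + 1) • b + (z + w)) : a = b + w := by
  apply add_right_cancel (b := n • b + z)
  calc a + (n • b + z) = (n + 1) • a := by rw [← hn, succ_nsmul, add_comm]
    _ = b + w + (n • b + z) := by rw [hn1, succ_nsmul]; abel

end Cancel

/-- Let `V` be a positive ordered abelian semigroup with the algebraic order and the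
cancellation property, and `γ : V → G` the Grothendieck map with `G⁺ = γ(V)`.  Every element
of `G` is a difference `γ(a) - γ(b)`, and `γ(a) - γ(b) ∈ G⁺` iff `∃ z u, a + u = b + z + u`. -/
theorem stmt_17 {V : Type*} [AddCommMonoid V]
    (hcancel : ∀ a b c : V, a + c = b + c → a = b)
    (hau : ∀ (x y : V) (n m : ℕ), m < n → (∃ w : V, m • y = n • x + w) →
      ∃ w : V, y = x + w) :
    ∀ (a b : V) (n : ℕ),
      (∃ z u : V, n • a + u = n • b + z + u) →
      (∃ z u : V, (n + 1) • a + u = (n + 1) • b + z + u) →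
      ∃ z u : V, a + u = b + z + u := by
  rintro a b n ⟨z, u, hn⟩ ⟨z', u', hn1⟩
  have : IsRightCancelAdd V := ⟨fun a _ _ h => hcancel _ _ a h⟩
  replace hn : n • a = n • b + z := add_right_cancel hn
  replace hn1 : (n + 1) • a = (n + 1) • b + z' := add_right_cancel hn1
  obtain ⟨w, rfl⟩ := hau z z' (n + 1) n n.lt_succ_self
    ⟨0, by rw [add_zero, nsmul_eq_nsmul_of_nsmul_eq_nsmul_add hn hn1]⟩
  exact ⟨w, 0, by rw [add_zero, add_zero, eq_add_of_nsmul_eq_nsmul_add_of_succ_nsmul hn hn1]⟩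
end
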